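/- Let m ≥ n, let A ∈ ℝ^{m×n} have full rank n with columns a_j, and let u > 0. Suppose ΔA ∈ ℝ^{m×n} satisfies |ΔA_{ij}| ≤ 2u‖a_j‖₂ for all i, j, and that 4√m·u < 1 and 16m√n·u·κ₂ᴰ(A) < 1. Then A + ΔA has nonzero columns and κ₂ᴰ(A + ΔA) ≤ 3κ₂ᴰ(A). -/

import Mathlib

open scoped BigOperators
open Matrix

/-- Euclidean norm of a vector in `ℝ^m`. -/
noncomputable def vecNorm {m : ℕ} (v : Fin m → ℝ) : ℝ :=
  Real.sqrt (∑ i, v i ^ 2)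

/-- The `k`-th largest singular value of a real `m × n` matrix
(`k = 0` gives the largest). -/
noncomputable def sval {m n : ℕ} (A : Matrix (Fin m) (Fin n) ℝ) (k : Fin n) : ℝ :=
  Real.sqrt
    (((show (Aᵀ * A).IsHermitian by simpa using Matrix.isHermitian_conjTranspose_mul_self A).eigenvalues ∘
      Tuple.sort (show (Aᵀ * A).IsHermitian by simpa using Matrix.isHermitian_conjTranspose_mul_self A).eigenvalues) k.rev)

/-- Spectral norm: the largest singular value. -/
noncomputable def specNorm {m n : ℕ} (A : Matrix (Fin m) (Fin n) ℝ) : ℝ :=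
  ⨆ k, sval A k

/-- Smallest singular value. -/
noncomputable def sMin {m n : ℕ} (A : Matrix (Fin m) (Fin n) ℝ) : ℝ :=
  ⨅ k, sval A k

/-- Frobenius norm. -/
noncomputable def frobNorm {m n : ℕ} (A : Matrix (Fin m) (Fin n) ℝ) : ℝ :=
  Real.sqrt (∑ i, ∑ j, (A i j) ^ 2)

/-- Frobenius norm of the off-diagonal part of a square matrix. -/
noncomputable def offF {n : ℕ} (M : Matrix (Fin n) (Fin n) ℝ) : ℝ :=
  frobNorm (M - Matrix.diagonal (fun i => M i i))

/-- Diagonal matrix of inverse column norms `D(A)`. -/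
noncomputable def colScale {m n : ℕ} (A : Matrix (Fin m) (Fin n) ℝ) :
    Matrix (Fin n) (Fin n) ℝ :=
  Matrix.diagonal (fun j => (vecNorm (fun i => A i j))⁻¹)

/-- Condition number `κ₂(A) = σ_max(A) / σ_min(A)`. -/
noncomputable def kappa2 {m n : ℕ} (A : Matrix (Fin m) (Fin n) ℝ) : ℝ :=
  specNorm A / sMin A

/-- One-sided scaled condition number `κ₂ᴰ(A) = κ₂(A · D(A))`. -/
noncomputable def scaledCond {m n : ℕ} (A : Matrix (Fin m) (Fin n) ℝ) : ℝ :=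
  kappa2 (A * colScale A)

/-- Entrywise absolute value of a matrix. -/
def matAbs {m n : ℕ} (A : Matrix (Fin m) (Fin n) ℝ) : Matrix (Fin m) (Fin n) ℝ :=
  fun i j => |A i j|

/-!
Normalising the columns of `A` and of `A + ΔA` gives `B = A D(A)` and `B + F`. Each column of
`ΔA` has norm at most `t ‖a_j‖` with `t = 2 √m u ≤ 1/2`, so each column of `F`, a difference of
unit vectors in nearby directions, has norm at most `4 t`, and `‖F‖₂ ≤ ‖F‖_F ≤ 8 √(mn) u`.
Since the columns of `B` are unit vectors, `σ_max(B) ≥ 1`, and the hypothesis on `κ₂ᴰ(A)` makes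
`‖F‖₂ ≤ σ_min(B) / 2`. Weyl's inequalities then give `σ_max(B + F) ≤ 3/2 σ_max(B)` and
`σ_min(B + F) ≥ σ_min(B) / 2`.
-/

namespace Matrix.IsHermitian

variable {ι : Type*} [Fintype ι] [DecidableEq ι] {H : Matrix ι ι ℝ} (hH : H.IsHermitian)

lemma dotProduct_self_eq_sum_sq (v : ι → ℝ) :
    v ⬝ᵥ v = ∑ i, (⇑(hH.eigenvectorBasis i) ⬝ᵥ v) ^ 2 := by
  have := hH.eigenvectorBasis.sum_inner_mul_inner (WithLp.toLp 2 v) (WithLp.toLp 2 v)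
  simp only [EuclideanSpace.inner_eq_star_dotProduct, star_trivial] at this
  rw [← this]
  exact Finset.sum_congr rfl fun i _ => by rw [dotProduct_comm, sq]

lemma dotProduct_mulVec_eq_sum (v : ι → ℝ) :
    v ⬝ᵥ (H *ᵥ v) = ∑ i, hH.eigenvalues i * (⇑(hH.eigenvectorBasis i) ⬝ᵥ v) ^ 2 := by
  have := hH.eigenvectorBasis.sum_inner_mul_inner (WithLp.toLp 2 v) (WithLp.toLp 2 (H *ᵥ v))
  simp only [EuclideanSpace.inner_eq_star_dotProduct, star_trivial] at this
  rw [dotProduct_comm, ← this]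
  refine Finset.sum_congr rfl fun i _ => ?_
  have hsymm : H *ᵥ v ⬝ᵥ ⇑(hH.eigenvectorBasis i) =
      hH.eigenvalues i * (⇑(hH.eigenvectorBasis i) ⬝ᵥ v) := by
    rw [dotProduct_comm, dotProduct_mulVec, ← mulVec_transpose,
      ← conjTranspose_eq_transpose_of_trivial, hH.eq, hH.mulVec_eigenvectorBasis,
      smul_dotProduct, smul_eq_mul, dotProduct_comm]
  rw [hsymm]
  ring

lemma dotProduct_mulVec_le {c : ℝ} (hc : ∀ i, hH.eigenvalues i ≤ c) (v : ι → ℝ) :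
    v ⬝ᵥ (H *ᵥ v) ≤ c * (v ⬝ᵥ v) := by
  rw [hH.dotProduct_mulVec_eq_sum, hH.dotProduct_self_eq_sum_sq, Finset.mul_sum]
  exact Finset.sum_le_sum fun i _ => mul_le_mul_of_nonneg_right (hc i) (sq_nonneg _)

lemma le_dotProduct_mulVec {c : ℝ} (hc : ∀ i, c ≤ hH.eigenvalues i) (v : ι → ℝ) :
    c * (v ⬝ᵥ v) ≤ v ⬝ᵥ (H *ᵥ v) := by
  rw [hH.dotProduct_mulVec_eq_sum, hH.dotProduct_self_eq_sum_sq, Finset.mul_sum]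
  exact Finset.sum_le_sum fun i _ => mul_le_mul_of_nonneg_right (hc i) (sq_nonneg _)

lemma eigenvectorBasis_dotProduct_self (i : ι) :
    ⇑(hH.eigenvectorBasis i) ⬝ᵥ ⇑(hH.eigenvectorBasis i) = 1 := by
  have h := real_inner_self_eq_norm_sq (hH.eigenvectorBasis i)
  rwa [hH.eigenvectorBasis.orthonormal.1 i, one_pow, EuclideanSpace.inner_eq_star_dotProduct,
    star_trivial] at h

lemma eigenvectorBasis_dotProduct_mulVec (i : ι) :
    ⇑(hH.eigenvectorBasis i) ⬝ᵥ (H *ᵥ ⇑(hH.eigenvectorBasis i)) = hH.eigenvalues i := by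
  rw [hH.mulVec_eigenvectorBasis, dotProduct_smul, hH.eigenvectorBasis_dotProduct_self,
    smul_eq_mul, mul_one]

end Matrix.IsHermitian

section NormedSpace

variable {E : Type*} [NormedAddCommGroup E]

lemma norm_le_two_mul_norm_add {x d : E} {t : ℝ} (hd : ‖d‖ ≤ t * ‖x‖) (ht : t ≤ 1 / 2) :
    ‖x‖ ≤ 2 * ‖x + d‖ := by
  have := norm_sub_norm_le x (-d)
  rw [sub_neg_eq_add, norm_neg] at this
  nlinarith [norm_nonneg x]

variable [NormedSpace ℝ E]

lemma norm_inv_norm_smul_sub_inv_norm_smul_le {x y : E} (hy : y ≠ 0) :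
    ‖‖y‖⁻¹ • y - ‖x‖⁻¹ • x‖ ≤ 2 * ‖y - x‖ / ‖y‖ := by
  have hy' : 0 < ‖y‖ := norm_pos_iff.2 hy
  have hsplit : ‖y‖⁻¹ • y - ‖x‖⁻¹ • x = ‖y‖⁻¹ • (y - x) + (‖y‖⁻¹ - ‖x‖⁻¹) • x := by
    rw [smul_sub, sub_smul]; abel
  have hx : ‖(‖y‖⁻¹ - ‖x‖⁻¹) • x‖ ≤ ‖y - x‖ / ‖y‖ := by
    rcases eq_or_ne x 0 with rfl | hx
    · simp only [smul_zero, norm_zero]; positivity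
    have hcoef : (‖y‖⁻¹ - ‖x‖⁻¹) * ‖x‖ = (‖x‖ - ‖y‖) / ‖y‖ := by
      field_simp [norm_ne_zero_iff.2 hx]
    calc ‖(‖y‖⁻¹ - ‖x‖⁻¹) • x‖ = |‖x‖ - ‖y‖| / ‖y‖ := by
          rw [norm_smul, Real.norm_eq_abs, ← abs_norm x, ← abs_mul, abs_norm, hcoef, abs_div,
            abs_norm]
      _ ≤ ‖y - x‖ / ‖y‖ := by
          gcongr
          rw [norm_sub_rev]
          exact abs_norm_sub_norm_le x y
  calc ‖‖y‖⁻¹ • y - ‖x‖⁻¹ • x‖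
      ≤ ‖y‖⁻¹ * ‖y - x‖ + ‖y - x‖ / ‖y‖ := by
        rw [hsplit]
        refine (norm_add_le _ _).trans (add_le_add ?_ hx)
        rw [norm_smul, norm_inv, norm_norm]
    _ = 2 * ‖y - x‖ / ‖y‖ := by ring

lemma norm_inv_norm_smul_add_sub_le {x d : E} {t : ℝ} (hx : x ≠ 0) (hd : ‖d‖ ≤ t * ‖x‖)
    (ht : t ≤ 1 / 2) : ‖‖x + d‖⁻¹ • (x + d) - ‖x‖⁻¹ • x‖ ≤ 4 * t := by
  have hx' : 0 < ‖x‖ := norm_pos_iff.2 hx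
  have hxd := norm_le_two_mul_norm_add hd ht
  calc ‖‖x + d‖⁻¹ • (x + d) - ‖x‖⁻¹ • x‖
      ≤ 2 * ‖d‖ / ‖x + d‖ := by
        simpa using norm_inv_norm_smul_sub_inv_norm_smul_le (x := x)
          (norm_pos_iff.1 (by linarith) : x + d ≠ 0)
    _ ≤ 2 * (t * ‖x‖) / (‖x‖ / 2) := by
        gcongr
        · linarith [norm_nonneg d]
        · linarith
    _ = 4 * t := by field_simp; ring

end NormedSpace

section VecNorm

variable {m n : ℕ}

lemma vecNorm_eq_norm (v : Fin m → ℝ) :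
    vecNorm v = ‖(WithLp.toLp 2 v : EuclideanSpace ℝ (Fin m))‖ := by
  simp [vecNorm, EuclideanSpace.norm_eq]

lemma vecNorm_pos_iff {v : Fin m → ℝ} : 0 < vecNorm v ↔ v ≠ 0 := by
  rw [vecNorm_eq_norm, norm_pos_iff, Ne, WithLp.toLp_eq_zero]

lemma vecNorm_nonneg (v : Fin m → ℝ) : 0 ≤ vecNorm v := Real.sqrt_nonneg _

lemma vecNorm_sq (v : Fin m → ℝ) : vecNorm v ^ 2 = ∑ i, v i ^ 2 :=
  Real.sq_sqrt (Finset.sum_nonneg fun _ _ => sq_nonneg _)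

lemma vecNorm_eq_sqrt_dotProduct (v : Fin m → ℝ) : vecNorm v = √(v ⬝ᵥ v) := by
  simp [vecNorm, dotProduct, sq]

lemma vecNorm_smul (c : ℝ) (v : Fin m → ℝ) : vecNorm (c • v) = |c| * vecNorm v := by
  rw [vecNorm_eq_norm, vecNorm_eq_norm, WithLp.toLp_smul, norm_smul, Real.norm_eq_abs]

lemma vecNorm_single (j : Fin n) : vecNorm (Pi.single j (1 : ℝ)) = 1 := by
  simp [vecNorm_eq_norm]

lemma vecNorm_le_sqrt_card_mul {v : Fin m → ℝ} {c : ℝ} (hc : 0 ≤ c) (hv : ∀ i, |v i| ≤ c) :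
    vecNorm v ≤ √m * c := by
  rw [← Real.sqrt_sq hc, ← Real.sqrt_mul (Nat.cast_nonneg _), vecNorm]
  gcongr
  calc ∑ i, v i ^ 2 ≤ ∑ _i : Fin m, c ^ 2 :=
        Finset.sum_le_sum fun i _ => by rw [← sq_abs]; gcongr; exact hv i
    _ = m * c ^ 2 := by simp

lemma frobNorm_le_sqrt_card_mul {X : Matrix (Fin m) (Fin n) ℝ} {c : ℝ} (hc : 0 ≤ c)
    (h : ∀ j, vecNorm (fun i => X i j) ≤ c) : frobNorm X ≤ √n * c := by
  have hcols : frobNorm X = vecNorm fun j => vecNorm fun i => X i j := by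
    rw [frobNorm, vecNorm, Finset.sum_comm]
    congr 1
    exact Finset.sum_congr rfl fun j _ => (vecNorm_sq _).symm
  rw [hcols]
  exact vecNorm_le_sqrt_card_mul hc fun j => (abs_of_nonneg (vecNorm_nonneg _)).trans_le (h j)

end VecNorm

section SingularValues

variable {m n : ℕ}

lemma isHermitian_transpose_mul_self (X : Matrix (Fin m) (Fin n) ℝ) : (Xᵀ * X).IsHermitian := by
  simpa using isHermitian_conjTranspose_mul_self X

noncomputable abbrev gramEigenvalues (X : Matrix (Fin m) (Fin n) ℝ) : Fin n → ℝ :=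
  (isHermitian_transpose_mul_self X).eigenvalues

lemma gramEigenvalues_nonneg (X : Matrix (Fin m) (Fin n) ℝ) (i : Fin n) :
    0 ≤ gramEigenvalues X i :=
  eigenvalues_conjTranspose_mul_self_nonneg X i

lemma exists_specNorm_eq_sqrt_gramEigenvalues (hn : 0 < n) (X : Matrix (Fin m) (Fin n) ℝ) :
    ∃ i, specNorm X = √(gramEigenvalues X i) ∧ ∀ j, gramEigenvalues X j ≤ gramEigenvalues X i := by
  have : Nonempty (Fin n) := ⟨⟨0, hn⟩⟩
  obtain ⟨i, hi⟩ := Finite.exists_max (gramEigenvalues X)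
  refine ⟨i, le_antisymm (ciSup_le fun k => Real.sqrt_le_sqrt (hi _)) ?_, hi⟩
  have hk : sval X ((Tuple.sort (gramEigenvalues X)).symm i).rev = √(gramEigenvalues X i) := by
    simp [sval]
  exact hk ▸ le_ciSup (Set.finite_range _).bddAbove _

lemma exists_sMin_eq_sqrt_gramEigenvalues (hn : 0 < n) (X : Matrix (Fin m) (Fin n) ℝ) :
    ∃ i, sMin X = √(gramEigenvalues X i) ∧ ∀ j, gramEigenvalues X i ≤ gramEigenvalues X j := by
  have : Nonempty (Fin n) := ⟨⟨0, hn⟩⟩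
  obtain ⟨i, hi⟩ := Finite.exists_min (gramEigenvalues X)
  refine ⟨i, le_antisymm ?_ (le_ciInf fun k => Real.sqrt_le_sqrt (hi _)), hi⟩
  have hk : sval X ((Tuple.sort (gramEigenvalues X)).symm i).rev = √(gramEigenvalues X i) := by
    simp [sval]
  exact hk ▸ ciInf_le (Set.finite_range _).bddBelow _

lemma vecNorm_mulVec_eq_sqrt (X : Matrix (Fin m) (Fin n) ℝ) (v : Fin n → ℝ) :
    vecNorm (X *ᵥ v) = √(v ⬝ᵥ ((Xᵀ * X) *ᵥ v)) := by
  rw [vecNorm_eq_sqrt_dotProduct, ← mulVec_mulVec, dotProduct_mulVec v Xᵀ, vecMul_transpose]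

lemma vecNorm_mulVec_le_specNorm_mul (hn : 0 < n) (X : Matrix (Fin m) (Fin n) ℝ)
    (v : Fin n → ℝ) : vecNorm (X *ᵥ v) ≤ specNorm X * vecNorm v := by
  obtain ⟨i, hi, hmax⟩ := exists_specNorm_eq_sqrt_gramEigenvalues hn X
  rw [vecNorm_mulVec_eq_sqrt, vecNorm_eq_sqrt_dotProduct, hi,
    ← Real.sqrt_mul (gramEigenvalues_nonneg X i)]
  exact Real.sqrt_le_sqrt ((isHermitian_transpose_mul_self X).dotProduct_mulVec_le hmax v)

lemma sMin_mul_le_vecNorm_mulVec (hn : 0 < n) (X : Matrix (Fin m) (Fin n) ℝ)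
    (v : Fin n → ℝ) : sMin X * vecNorm v ≤ vecNorm (X *ᵥ v) := by
  obtain ⟨i, hi, hmin⟩ := exists_sMin_eq_sqrt_gramEigenvalues hn X
  rw [vecNorm_mulVec_eq_sqrt, vecNorm_eq_sqrt_dotProduct, hi,
    ← Real.sqrt_mul (gramEigenvalues_nonneg X i)]
  exact Real.sqrt_le_sqrt ((isHermitian_transpose_mul_self X).le_dotProduct_mulVec hmin v)

lemma vecNorm_eigenvectorBasis (X : Matrix (Fin m) (Fin n) ℝ) (i : Fin n) :
    vecNorm ⇑((isHermitian_transpose_mul_self X).eigenvectorBasis i) = 1 := by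
  rw [vecNorm_eq_sqrt_dotProduct, IsHermitian.eigenvectorBasis_dotProduct_self, Real.sqrt_one]

lemma vecNorm_mulVec_eigenvectorBasis (X : Matrix (Fin m) (Fin n) ℝ) (i : Fin n) :
    vecNorm (X *ᵥ ⇑((isHermitian_transpose_mul_self X).eigenvectorBasis i)) =
      √(gramEigenvalues X i) := by
  rw [vecNorm_mulVec_eq_sqrt, IsHermitian.eigenvectorBasis_dotProduct_mulVec]

lemma exists_vecNorm_eq_one_vecNorm_mulVec_eq_specNorm (hn : 0 < n)
    (X : Matrix (Fin m) (Fin n) ℝ) :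
    ∃ v, vecNorm v = 1 ∧ vecNorm (X *ᵥ v) = specNorm X := by
  obtain ⟨i, hi, -⟩ := exists_specNorm_eq_sqrt_gramEigenvalues hn X
  exact ⟨_, vecNorm_eigenvectorBasis X i, (vecNorm_mulVec_eigenvectorBasis X i).trans hi.symm⟩

lemma exists_vecNorm_eq_one_vecNorm_mulVec_eq_sMin (hn : 0 < n)
    (X : Matrix (Fin m) (Fin n) ℝ) :
    ∃ v, vecNorm v = 1 ∧ vecNorm (X *ᵥ v) = sMin X := by
  obtain ⟨i, hi, -⟩ := exists_sMin_eq_sqrt_gramEigenvalues hn X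
  exact ⟨_, vecNorm_eigenvectorBasis X i, (vecNorm_mulVec_eigenvectorBasis X i).trans hi.symm⟩

lemma specNorm_le_of_forall_vecNorm_mulVec_le (hn : 0 < n) {X : Matrix (Fin m) (Fin n) ℝ}
    {c : ℝ} (h : ∀ v, vecNorm (X *ᵥ v) ≤ c * vecNorm v) : specNorm X ≤ c := by
  obtain ⟨v, hv, hXv⟩ := exists_vecNorm_eq_one_vecNorm_mulVec_eq_specNorm hn X
  simpa [hv, hXv] using h v

lemma sMin_le_specNorm (hn : 0 < n) (X : Matrix (Fin m) (Fin n) ℝ) : sMin X ≤ specNorm X :=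
  have : Nonempty (Fin n) := ⟨⟨0, hn⟩⟩
  ciInf_le_ciSup (Set.finite_range _).bddBelow (Set.finite_range _).bddAbove

lemma sMin_pos_of_injective (hn : 0 < n) {X : Matrix (Fin m) (Fin n) ℝ}
    (hX : Function.Injective X.mulVec) : 0 < sMin X := by
  obtain ⟨v, hv, hXv⟩ := exists_vecNorm_eq_one_vecNorm_mulVec_eq_sMin hn X
  have hv0 : v ≠ 0 := vecNorm_pos_iff.1 (hv ▸ one_pos)
  rw [← hXv, vecNorm_pos_iff, ← mulVec_zero X]
  exact hX.ne hv0

lemma specNorm_add_le (hn : 0 < n) (X Y : Matrix (Fin m) (Fin n) ℝ) :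
    specNorm (X + Y) ≤ specNorm X + specNorm Y := by
  refine specNorm_le_of_forall_vecNorm_mulVec_le hn fun v => ?_
  calc vecNorm ((X + Y) *ᵥ v) ≤ vecNorm (X *ᵥ v) + vecNorm (Y *ᵥ v) := by
        simpa only [add_mulVec, vecNorm_eq_norm, WithLp.toLp_add] using norm_add_le _ _
    _ ≤ specNorm X * vecNorm v + specNorm Y * vecNorm v :=
        add_le_add (vecNorm_mulVec_le_specNorm_mul hn X v) (vecNorm_mulVec_le_specNorm_mul hn Y v)
    _ = (specNorm X + specNorm Y) * vecNorm v := by ring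

lemma sMin_sub_specNorm_le_sMin_add (hn : 0 < n) (X Y : Matrix (Fin m) (Fin n) ℝ) :
    sMin X - specNorm Y ≤ sMin (X + Y) := by
  obtain ⟨v, hv, hXYv⟩ := exists_vecNorm_eq_one_vecNorm_mulVec_eq_sMin hn (X + Y)
  have hX := sMin_mul_le_vecNorm_mulVec hn X v
  have hY := vecNorm_mulVec_le_specNorm_mul hn Y v
  have htri : vecNorm (X *ᵥ v) ≤ vecNorm ((X + Y) *ᵥ v) + vecNorm (Y *ᵥ v) := by
    simpa only [add_mulVec, vecNorm_eq_norm, WithLp.toLp_add] using norm_le_add_norm_add _ _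
  rw [hv, mul_one] at hX hY
  linarith

lemma specNorm_le_frobNorm (hn : 0 < n) (X : Matrix (Fin m) (Fin n) ℝ) :
    specNorm X ≤ frobNorm X := by
  refine specNorm_le_of_forall_vecNorm_mulVec_le hn fun v => ?_
  rw [frobNorm, vecNorm, vecNorm, ← Real.sqrt_mul (by positivity), Finset.sum_mul]
  exact Real.sqrt_le_sqrt (Finset.sum_le_sum fun i _ =>
    Finset.sum_mul_sq_le_sq_mul_sq Finset.univ (X i) v)

lemma kappa2_add_le_three_mul (hn : 0 < n) {X Y : Matrix (Fin m) (Fin n) ℝ}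
    (hX : 0 < sMin X) (hY : 2 * specNorm Y ≤ sMin X) : kappa2 (X + Y) ≤ 3 * kappa2 X := by
  have hmax : specNorm (X + Y) ≤ 3 / 2 * specNorm X := by
    linarith [specNorm_add_le hn X Y, sMin_le_specNorm hn X]
  have hmin : sMin X / 2 ≤ sMin (X + Y) := by
    linarith [sMin_sub_specNorm_le_sMin_add hn X Y]
  calc kappa2 (X + Y) ≤ 3 / 2 * specNorm X / (sMin X / 2) := by
        unfold kappa2
        gcongr
        linarith [sMin_le_specNorm hn X]
    _ = 3 * kappa2 X := by unfold kappa2; field_simp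

end SingularValues

section Columns

variable {m n : ℕ}

lemma linearIndependent_col_of_rank_eq {X : Matrix (Fin m) (Fin n) ℝ} (h : X.rank = n) :
    LinearIndependent ℝ X.col := by
  rw [rank_eq_finrank_span_cols] at h
  rw [linearIndependent_iff_card_eq_finrank_span, Fintype.card_fin]
  exact h.symm

lemma col_mul_colScale (X : Matrix (Fin m) (Fin n) ℝ) (j : Fin n) :
    (fun i => (X * colScale X) i j) = (vecNorm fun i => X i j)⁻¹ • fun i => X i j := by
  funext i
  simp [colScale, mul_comm]

lemma vecNorm_col_mul_colScale {X : Matrix (Fin m) (Fin n) ℝ} {j : Fin n}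
    (hj : (fun i => X i j) ≠ 0) : vecNorm (fun i => (X * colScale X) i j) = 1 := by
  rw [col_mul_colScale, vecNorm_smul, abs_inv, abs_of_nonneg (vecNorm_nonneg _),
    inv_mul_cancel₀ (vecNorm_pos_iff.2 hj).ne']

lemma one_le_specNorm_of_vecNorm_col_eq_one {X : Matrix (Fin m) (Fin n) ℝ} (j : Fin n)
    (h : vecNorm (fun i => X i j) = 1) : 1 ≤ specNorm X := by
  have := vecNorm_mulVec_le_specNorm_mul j.pos X (Pi.single j 1)
  rw [mulVec_single_one, vecNorm_single, mul_one] at this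
  exact h.symm.le.trans this

lemma mulVec_injective_mul_colScale {X : Matrix (Fin m) (Fin n) ℝ}
    (hX : LinearIndependent ℝ X.col) : Function.Injective (X * colScale X).mulVec := by
  have hD : Function.Injective (colScale X).mulVec := fun v w hvw => funext fun j => by
    have := congrFun hvw j
    simp only [colScale, mulVec_diagonal] at this
    exact mul_left_cancel₀ (inv_ne_zero (vecNorm_pos_iff.2 (hX.ne_zero j)).ne') this
  have hcomp : (X * colScale X).mulVec = X.mulVec ∘ (colScale X).mulVec :=
    funext fun v => (mulVec_mulVec v X _).symm
  rw [hcomp]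
  exact (mulVec_injective_iff.2 hX).comp hD

lemma col_add_ne_zero {X D : Matrix (Fin m) (Fin n) ℝ} {t : ℝ} {j : Fin n}
    (hX : (fun i => X i j) ≠ 0) (hD : vecNorm (fun i => D i j) ≤ t * vecNorm (fun i => X i j))
    (ht : t ≤ 1 / 2) : (fun i => (X + D) i j) ≠ 0 := by
  show (fun i => X i j) + (fun i => D i j) ≠ 0
  rw [← vecNorm_pos_iff] at hX ⊢
  simp only [vecNorm_eq_norm, WithLp.toLp_add] at hD hX ⊢
  linarith [norm_le_two_mul_norm_add hD ht]

lemma vecNorm_col_mul_colScale_add_sub_le {X D : Matrix (Fin m) (Fin n) ℝ} {t : ℝ} {j : Fin n}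
    (hX : (fun i => X i j) ≠ 0) (hD : vecNorm (fun i => D i j) ≤ t * vecNorm (fun i => X i j))
    (ht : t ≤ 1 / 2) :
    vecNorm (fun i => ((X + D) * colScale (X + D) - X * colScale X) i j) ≤ 4 * t := by
  have hcol : (fun i => ((X + D) * colScale (X + D) - X * colScale X) i j) =
      (fun i => ((X + D) * colScale (X + D)) i j) - fun i => (X * colScale X) i j := rfl
  rw [hcol, col_mul_colScale, col_mul_colScale]
  simp only [vecNorm_eq_norm] at hD
  have h := norm_inv_norm_smul_add_sub_le (by simpa using hX) hD ht
  simp only [vecNorm_eq_norm, WithLp.toLp_sub, WithLp.toLp_smul]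
  exact h

lemma le_sMin_mul_colScale (hn : 0 < n) {X : Matrix (Fin m) (Fin n) ℝ}
    (hX : LinearIndependent ℝ X.col) {c : ℝ} (hc : 0 ≤ c) (hcX : c * scaledCond X ≤ 1) :
    c ≤ sMin (X * colScale X) := by
  have hmin := sMin_pos_of_injective hn (mulVec_injective_mul_colScale hX)
  have hmax := one_le_specNorm_of_vecNorm_col_eq_one ⟨0, hn⟩
    (vecNorm_col_mul_colScale (hX.ne_zero _))
  rw [scaledCond, kappa2, mul_div_assoc', div_le_one hmin] at hcX
  nlinarith

end Columns

theorem scaled_cond_perturbation_bound_general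
    {m n : ℕ}
    (A : Matrix (Fin m) (Fin n) ℝ) (hrank : A.rank = n)
    (u : ℝ) (hu : 0 < u)
    (ΔA : Matrix (Fin m) (Fin n) ℝ)
    (hΔ : ∀ i j, |ΔA i j| ≤ 2 * u * vecNorm (fun i => A i j))
    (h1 : 4 * Real.sqrt m * u < 1)
    (h2 : 16 * m * Real.sqrt n * u * scaledCond A < 1) :
    (∀ j, (fun i => (A + ΔA) i j) ≠ 0) ∧
      scaledCond (A + ΔA) ≤ 3 * scaledCond A := by
  rcases Nat.eq_zero_or_pos n with rfl | hn
  -- without columns, `specNorm` and `sMin` are empty suprema and infima, hence `0`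
  · exact ⟨finZeroElim, by simp [scaledCond, kappa2, specNorm, sMin]⟩
  have hcols := linearIndependent_col_of_rank_eq hrank
  set t := 2 * √m * u
  have ht : t ≤ 1 / 2 := by linarith
  have hΔcol (j : Fin n) : vecNorm (fun i => ΔA i j) ≤ t * vecNorm (fun i => A i j) :=
    (vecNorm_le_sqrt_card_mul (mul_nonneg (by positivity) (vecNorm_nonneg _)) (hΔ · j)).trans_eq
      (by ring)
  refine ⟨fun j => col_add_ne_zero (hcols.ne_zero j) (hΔcol j) ht, ?_⟩
  set B := A * colScale A
  set F := (A + ΔA) * colScale (A + ΔA) - B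
  have hF : specNorm F ≤ √n * (4 * t) :=
    (specNorm_le_frobNorm hn F).trans <| frobNorm_le_sqrt_card_mul (by positivity) fun j =>
      vecNorm_col_mul_colScale_add_sub_le (hcols.ne_zero j) (hΔcol j) ht
  have hsqrt : √m ≤ m := (Real.sqrt_le_left (Nat.cast_nonneg m)).2 (by norm_cast; nlinarith)
  have hFB : 2 * specNorm F ≤ sMin B := calc
    2 * specNorm F ≤ 16 * √m * √n * u := by linarith
    _ ≤ 16 * m * √n * u := by gcongr
    _ ≤ sMin B := le_sMin_mul_colScale hn hcols (by positivity) h2.le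
  have hBF : scaledCond (A + ΔA) = kappa2 (B + F) := by rw [add_sub_cancel]; rfl
  exact hBF ▸ kappa2_add_le_three_mul hn (sMin_pos_of_injective hn
    (mulVec_injective_mul_colScale hcols)) hFB

/-- Lemma 2.11: relationship between the scaled condition numbers of a matrix
and its columnwise-small perturbation: `κ₂ᴰ(A + ΔA) ≤ 3κ₂ᴰ(A)`. -/
theorem scaled_cond_perturbation_bound
    {m n : ℕ} (hmn : n ≤ m)
    (A : Matrix (Fin m) (Fin n) ℝ) (hrank : A.rank = n)
    (u : ℝ) (hu : 0 < u)
    (ΔA : Matrix (Fin m) (Fin n) ℝ)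
    (hΔ : ∀ i j, |ΔA i j| ≤ 2 * u * vecNorm (fun i => A i j))
    (h1 : 4 * Real.sqrt m * u < 1)
    (h2 : 16 * m * Real.sqrt n * u * scaledCond A < 1) :
    (∀ j, (fun i => (A + ΔA) i j) ≠ 0) ∧
      scaledCond (A + ΔA) ≤ 3 * scaledCond A :=
  scaled_cond_perturbation_bound_general A hrank u hu ΔA hΔ h1 h2
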